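/- arXiv:2205.03760 — 2 statements merged into one kernel-verified Lean document; each statement's English description precedes it below -/
import Mathlib

section
/- For every b ∈ ℝ^n, let û := Σ_{i=1}^n ((γ·1 + G)⁻¹·b)_i · k_i ∈ H and ū := Σ_{i=1}^n (G⁻¹·b)_i · k_i ∈ H. Then ‖û − ū‖² ≤ γ²·bᵀ(G⁻¹)³b. -/
open Matrix
open scoped RealInnerProductSpace

/-!
Put `y = (γ • 1 + G)⁻¹ b`. Since `G⁻¹ (γ • 1 + G) = 1 + γ G⁻¹`, we get `G⁻¹ b = y + γ G⁻¹ y`, so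
`û - ū` has coefficient vector `-γ G⁻¹ y` and squared norm `γ² yᵀ G⁻¹ y`. On the other side
`bᵀ G⁻³ b = (G⁻¹ b)ᵀ G⁻¹ (G⁻¹ b)`, which expands into `yᵀ G⁻¹ y` plus the nonnegative terms
`2γ ‖G⁻¹ y‖²` and `γ² (G⁻¹ y)ᵀ G⁻¹ (G⁻¹ y)`.
-/

namespace Matrix

variable {ι : Type*} [Fintype ι] [DecidableEq ι]

lemma inv_mulVec_eq_add_smul {G : Matrix ι ι ℝ} (hG : IsUnit G.det) {γ : ℝ}
    (hA : IsUnit (γ • 1 + G).det) (b : ι → ℝ) :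
    G⁻¹ *ᵥ b = (γ • 1 + G)⁻¹ *ᵥ b + γ • G⁻¹ *ᵥ ((γ • 1 + G)⁻¹ *ᵥ b) := by
  calc G⁻¹ *ᵥ b = (G⁻¹ * (γ • 1 + G)) *ᵥ ((γ • 1 + G)⁻¹ *ᵥ b) := by
        rw [← mulVec_mulVec, mulVec_mulVec b, mul_nonsing_inv _ hA, one_mulVec]
    _ = _ := by
        rw [Matrix.mul_add, Matrix.mul_smul, Matrix.mul_one, nonsing_inv_mul _ hG, add_mulVec,
          smul_mulVec, one_mulVec, add_comm]

omit [DecidableEq ι] in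
lemma dotProduct_mulVec_comm_of_isHermitian {P : Matrix ι ι ℝ} (hP : P.IsHermitian)
    (x y : ι → ℝ) : x ⬝ᵥ (P *ᵥ y) = (P *ᵥ x) ⬝ᵥ y := by
  rw [dotProduct_mulVec, ← mulVec_transpose, ← conjTranspose_eq_transpose_of_trivial, hP]

omit [DecidableEq ι] in
lemma PosSemidef.dotProduct_mulVec_le_add_smul {P : Matrix ι ι ℝ} (hP : P.PosSemidef)
    {γ : ℝ} (hγ : 0 ≤ γ) (y : ι → ℝ) :
    y ⬝ᵥ (P *ᵥ y) ≤ (y + γ • P *ᵥ y) ⬝ᵥ (P *ᵥ (y + γ • P *ᵥ y)) := by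
  have h₁ : 0 ≤ (P *ᵥ y) ⬝ᵥ (P *ᵥ y) := by simpa using dotProduct_star_self_nonneg (P *ᵥ y)
  have h₂ : 0 ≤ (P *ᵥ y) ⬝ᵥ (P *ᵥ (P *ᵥ y)) := by
    simpa using hP.dotProduct_mulVec_nonneg (P *ᵥ y)
  have hsymm := dotProduct_mulVec_comm_of_isHermitian hP.isHermitian y (P *ᵥ y)
  simp only [mulVec_add, mulVec_smul, add_dotProduct, dotProduct_add, smul_dotProduct,
    dotProduct_smul, smul_eq_mul]
  nlinarith [mul_nonneg hγ h₁, mul_nonneg (mul_nonneg hγ hγ) h₂]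

lemma PosDef.dotProduct_mulVec_resolvent_sub_inv_le {G : Matrix ι ι ℝ} (hG : G.PosDef)
    {γ : ℝ} (hγ : 0 ≤ γ) (b : ι → ℝ) :
    ((γ • 1 + G)⁻¹ *ᵥ b - G⁻¹ *ᵥ b) ⬝ᵥ (G *ᵥ ((γ • 1 + G)⁻¹ *ᵥ b - G⁻¹ *ᵥ b)) ≤
      γ ^ 2 * (b ⬝ᵥ (G⁻¹ ^ 3 *ᵥ b)) := by
  have hGdet : IsUnit G.det := (isUnit_iff_isUnit_det G).mp hG.isUnit
  have hAdet : IsUnit (γ • 1 + G).det :=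
    (isUnit_iff_isUnit_det _).mp (hG.posSemidef_add (PosSemidef.one.smul hγ)).isUnit
  have hP := hG.inv
  have hPb := inv_mulVec_eq_add_smul hGdet hAdet b
  set y := (γ • 1 + G)⁻¹ *ᵥ b
  clear_value y
  have hc : y - G⁻¹ *ᵥ b = -γ • G⁻¹ *ᵥ y := by rw [hPb]; module
  calc (y - G⁻¹ *ᵥ b) ⬝ᵥ (G *ᵥ (y - G⁻¹ *ᵥ b))
      = γ ^ 2 * ((G⁻¹ *ᵥ y) ⬝ᵥ (G *ᵥ (G⁻¹ *ᵥ y))) := by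
        rw [hc, mulVec_smul, smul_dotProduct, dotProduct_smul, smul_eq_mul, smul_eq_mul]
        ring
    _ = γ ^ 2 * (y ⬝ᵥ (G⁻¹ *ᵥ y)) := by
        rw [mulVec_mulVec, mul_nonsing_inv _ hGdet, one_mulVec, dotProduct_comm]
    _ ≤ γ ^ 2 * ((y + γ • G⁻¹ *ᵥ y) ⬝ᵥ (G⁻¹ *ᵥ (y + γ • G⁻¹ *ᵥ y))) := by
        gcongr
        exact hP.posSemidef.dotProduct_mulVec_le_add_smul hγ y
    _ = γ ^ 2 * (b ⬝ᵥ (G⁻¹ ^ 3 *ᵥ b)) := by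
        rw [← hPb, pow_three, ← mulVec_mulVec, ← mulVec_mulVec,
          dotProduct_mulVec_comm_of_isHermitian hP.isHermitian b]

end Matrix

lemma norm_sum_smul_sq_eq_dotProduct_gram_mulVec {H ι : Type*} [NormedAddCommGroup H]
    [InnerProductSpace ℝ H] [Fintype ι] (k : ι → H) (c : ι → ℝ) :
    ‖∑ i, c i • k i‖ ^ 2 = c ⬝ᵥ (gram ℝ k *ᵥ c) := by
  rw [← real_inner_self_eq_norm_sq, ← star_dotProduct_gram_mulVec, star_trivial]

/-- With `û = ∑ᵢ ((γ1+G)⁻¹b)ᵢ kᵢ` and `ū = ∑ᵢ (G⁻¹b)ᵢ kᵢ`,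
one has `‖û − ū‖² ≤ γ²·bᵀ(G⁻¹)³b`. -/
theorem stmt_11 {H : Type*}
    [NormedAddCommGroup H] [InnerProductSpace ℝ H]
    {n : ℕ} (k : Fin n → H) (hk : LinearIndependent ℝ k)
    (G : Matrix (Fin n) (Fin n) ℝ) (hG : ∀ i j, G i j = ⟪k i, k j⟫)
    (γ : ℝ) (hγ : 0 < γ)
    (b : Fin n → ℝ) (uhat ubar : H)
    (huhat : uhat =
      ∑ i, (((γ • (1 : Matrix (Fin n) (Fin n) ℝ) + G)⁻¹) *ᵥ b) i • k i)
    (hubar : ubar = ∑ i, (G⁻¹ *ᵥ b) i • k i) :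
    ‖uhat - ubar‖ ^ 2 ≤ γ ^ 2 * (b ⬝ᵥ ((G⁻¹ ^ 3) *ᵥ b)) := by
  obtain rfl : G = gram ℝ k := Matrix.ext hG
  have hdiff : uhat - ubar = ∑ i,
      ((γ • (1 : Matrix (Fin n) (Fin n) ℝ) + gram ℝ k)⁻¹ *ᵥ b - (gram ℝ k)⁻¹ *ᵥ b) i • k i := by
    simp only [huhat, hubar, ← Finset.sum_sub_distrib, Pi.sub_apply, sub_smul]
  rw [hdiff, norm_sum_smul_sq_eq_dotProduct_gram_mulVec]
  exact (posDef_gram_of_linearIndependent hk).dotProduct_mulVec_resolvent_sub_inv_le hγ.le b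
end

section
/- For every β ∈ ℝ^n, the squared distance from Σ_{i=1}^n β_i k_i to the span of {g_1, …, g_m} satisfies inf_{v ∈ span{g_1, …, g_m}} ‖v − Σ_{i=1}^n β_i k_i‖² = βᵀ(G − A·Θ⁻¹·Aᵀ)β; in particular, the matrix G − A·Θ⁻¹·Aᵀ is symmetric positive semidefinite. -/
open Matrix
open scoped RealInnerProductSpace

/-!
The infimum is attained at the orthogonal projection `w = ∑ⱼ cⱼ gⱼ` of `x = ∑ᵢ βᵢ kᵢ` onto
`span g`, whose coefficients solve the normal equations `Θ c = b` with `bⱼ = ⟪x, gⱼ⟫ = (Aᵀβ)ⱼ`.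
Since `x - w ⟂ w`, the squared distance is `‖x - w‖² = ⟪x, x⟫ - ⟪x, w⟫ = βᵀGβ - bᵀΘ⁻¹b`,
which is `βᵀ(G - AΘ⁻¹Aᵀ)β`. Being a squared distance it is nonnegative, and
`G - AΘ⁻¹Aᵀ` is symmetric because `G` and `Θ⁻¹` are.
-/

section

variable {H : Type*} [NormedAddCommGroup H] [InnerProductSpace ℝ H] {ι κ : Type*}

theorem inner_sum_smul_sum_smul [Fintype ι] [Fintype κ] {u : ι → H} {v : κ → H}
    {M : Matrix ι κ ℝ} (hM : ∀ i j, M i j = ⟪u i, v j⟫) (a : ι → ℝ) (b : κ → ℝ) :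
    ⟪∑ i, a i • u i, ∑ j, b j • v j⟫ = a ⬝ᵥ (M *ᵥ b) := by
  simp only [sum_inner, inner_sum, real_inner_smul_left, real_inner_smul_right, dotProduct,
    mulVec, hM, Finset.mul_sum]
  rw [Finset.sum_comm]
  exact Finset.sum_congr rfl fun i _ => Finset.sum_congr rfl fun j _ => by ring

theorem mem_orthogonal_span_range {v : κ → H} {r : H} (h : ∀ j, ⟪v j, r⟫ = 0) :
    r ∈ (Submodule.span ℝ (Set.range v))ᗮ := by
  refine (Submodule.mem_orthogonal _ _).2 fun u hu => ?_
  have hle : Submodule.span ℝ (Set.range v) ≤ (ℝ ∙ r)ᗮ :=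
    Submodule.span_le.2 <| Set.range_subset_iff.2 fun j =>
      Submodule.mem_orthogonal_singleton_iff_inner_right.2 ((real_inner_comm _ _).trans (h j))
  rw [real_inner_comm]
  exact Submodule.mem_orthogonal_singleton_iff_inner_right.1 (hle hu)

theorem iInf_norm_sub_sq_eq_of_sub_mem_orthogonal {K : Submodule ℝ H} {x w : H} (hw : w ∈ K)
    (hxw : x - w ∈ Kᗮ) : ⨅ v : K, ‖(v : H) - x‖ ^ 2 = ‖x - w‖ ^ 2 := by
  have hpyth : ∀ v : K, ‖(v : H) - x‖ ^ 2 = ‖(v : H) - w‖ ^ 2 + ‖x - w‖ ^ 2 := fun v => by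
    have hperp : ⟪(v : H) - w, x - w⟫ = 0 :=
      (K.mem_orthogonal _).1 hxw _ (K.sub_mem v.2 hw)
    rw [show (v : H) - x = ((v : H) - w) - (x - w) by abel, norm_sub_sq_real, hperp]
    ring
  refine le_antisymm ?_ <| le_ciInf fun v => by
    rw [hpyth]
    exact le_add_of_nonneg_left (sq_nonneg _)
  calc ⨅ v : K, ‖(v : H) - x‖ ^ 2 ≤ ‖w - x‖ ^ 2 :=
        ciInf_le ⟨0, Set.forall_mem_range.2 fun _ => sq_nonneg _⟩ (⟨w, hw⟩ : K)
    _ = ‖x - w‖ ^ 2 := by rw [norm_sub_rev]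

variable [Fintype κ] [DecidableEq κ] {g : κ → H}

theorem inner_sub_sum_gram_inv_mulVec_smul (hg : LinearIndependent ℝ g) (x : H) (j : κ) :
    ⟪g j, x - ∑ l, ((gram ℝ g)⁻¹ *ᵥ fun l => ⟪g l, x⟫) l • g l⟫ = 0 := by
  have hunit : IsUnit (gram ℝ g).det :=
    (isUnit_iff_isUnit_det _).1 (posDef_gram_of_linearIndependent hg).isUnit
  have hnormal : gram ℝ g *ᵥ ((gram ℝ g)⁻¹ *ᵥ fun l => ⟪g l, x⟫) = fun l => ⟪g l, x⟫ := by
    rw [mulVec_mulVec, mul_nonsing_inv _ hunit, one_mulVec]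
  rw [inner_sub_right, sub_eq_zero, ← congrFun hnormal j]
  simp only [inner_sum, real_inner_smul_right, mulVec, dotProduct, gram_apply, mul_comm]

theorem iInf_norm_sub_sq_span_range (hg : LinearIndependent ℝ g) (x : H) :
    ⨅ v : Submodule.span ℝ (Set.range g), ‖(v : H) - x‖ ^ 2 =
      ⟪x, x⟫ - (fun l => ⟪g l, x⟫) ⬝ᵥ ((gram ℝ g)⁻¹ *ᵥ fun l => ⟪g l, x⟫) := by
  set c := (gram ℝ g)⁻¹ *ᵥ fun l => ⟪g l, x⟫
  have hw : ∑ l, c l • g l ∈ Submodule.span ℝ (Set.range g) :=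
    Submodule.sum_mem _ fun l _ => Submodule.smul_mem _ _ (Submodule.subset_span ⟨l, rfl⟩)
  have hperp : x - ∑ l, c l • g l ∈ (Submodule.span ℝ (Set.range g))ᗮ :=
    mem_orthogonal_span_range (inner_sub_sum_gram_inv_mulVec_smul hg x)
  rw [iInf_norm_sub_sq_eq_of_sub_mem_orthogonal hw hperp, ← real_inner_self_eq_norm_sq,
    inner_sub_right, (Submodule.mem_orthogonal' _ _).1 hperp _ hw, sub_zero, inner_sub_left,
    sum_inner]
  simp only [real_inner_smul_left, dotProduct, mul_comm]

end

/-- For every `β ∈ ℝⁿ`,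
`inf_{v ∈ span g} ‖v − ∑ᵢ βᵢ kᵢ‖² = βᵀ(G − AΘ⁻¹Aᵀ)β`; in particular
`G − AΘ⁻¹Aᵀ` is symmetric positive semidefinite. -/
theorem stmt_14 {H : Type*}
    [NormedAddCommGroup H] [InnerProductSpace ℝ H]
    {n m : ℕ} (k : Fin n → H) (g : Fin m → H)
    (hg : LinearIndependent ℝ g)
    (G : Matrix (Fin n) (Fin n) ℝ) (hG : ∀ i j, G i j = ⟪k i, k j⟫)
    (Θ : Matrix (Fin m) (Fin m) ℝ) (hΘ : ∀ i j, Θ i j = ⟪g i, g j⟫)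
    (A : Matrix (Fin n) (Fin m) ℝ) (hA : ∀ i j, A i j = ⟪k i, g j⟫) :
    (∀ β : Fin n → ℝ,
      (⨅ v : Submodule.span ℝ (Set.range g),
        ‖(v : H) - ∑ i, β i • k i‖ ^ 2) =
        β ⬝ᵥ ((G - A * Θ⁻¹ * Aᵀ) *ᵥ β)) ∧
    (G - A * Θ⁻¹ * Aᵀ).PosSemidef := by
  obtain rfl : Θ = gram ℝ g := Matrix.ext hΘ
  have hdist : ∀ β : Fin n → ℝ,
      (⨅ v : Submodule.span ℝ (Set.range g), ‖(v : H) - ∑ i, β i • k i‖ ^ 2) =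
        β ⬝ᵥ ((G - A * (gram ℝ g)⁻¹ * Aᵀ) *ᵥ β) := fun β => by
    have hb : (fun l => ⟪g l, ∑ i, β i • k i⟫) = Aᵀ *ᵥ β := funext fun l => by
      simp only [inner_sum, real_inner_smul_right, mulVec, dotProduct, transpose_apply, hA,
        real_inner_comm, mul_comm]
    rw [iInf_norm_sub_sq_span_range hg, hb, inner_sum_smul_sum_smul hG, sub_mulVec,
      dotProduct_sub, ← mulVec_mulVec, ← mulVec_mulVec, dotProduct_mulVec β A, ← mulVec_transpose]
  have hsymm : (G - A * (gram ℝ g)⁻¹ * Aᵀ).IsHermitian := by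
    have hG' : G.IsHermitian := by
      obtain rfl : G = gram ℝ k := Matrix.ext hG
      exact isHermitian_gram ℝ k
    have hinv := (posDef_gram_of_linearIndependent hg).inv.posSemidef
    simpa using hG'.sub (hinv.mul_mul_conjTranspose_same A).isHermitian
  refine ⟨hdist, .of_dotProduct_mulVec_nonneg hsymm fun β => ?_⟩
  rw [star_trivial, ← hdist]
  exact Real.iInf_nonneg fun _ => sq_nonneg _
end
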